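/- arXiv:2404.18920 — 4 statements merged into one kernel-verified Lean document; each statement's English description precedes it below -/
import Mathlib

section
/- Let γ₀ = (5−√21)/4 and let γ ∈ (0, γ₀). Then there exist real numbers μ ∈ (γ, 1/2−γ) and q ∈ (1, μ/γ) such that, setting p = 1/(1−1/q), κ = 1/(2q), θ = 1 + κ − μ, and α₀ = (2/q)·1/(1−θ), one has: θ ∈ (0,1), α₀ < 2, and (1 + 2γ − (1+2μ)/q)·p < 1. -/
set_option maxHeartbeats 1000000 in
/-- Existence of exponents (Proposition 2.2 of the paper). -/
theorem stmt2 (γ : ℝ) (hγ0 : 0 < γ) (hγ : γ < (5 - Real.sqrt 21) / 4) :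
    ∃ μ q : ℝ, γ < μ ∧ μ < 1 / 2 - γ ∧ 1 < q ∧ q < μ / γ ∧
      (let p := 1 / (1 - 1 / q)
       let κ := 1 / (2 * q)
       let θ := 1 + κ - μ
       let α₀ := (2 / q) * (1 / (1 - θ))
       0 < θ ∧ θ < 1 ∧ α₀ < 2 ∧ (1 + 2 * γ - (1 + 2 * μ) / q) * p < 1) := by
  have h21 : Real.sqrt 21 ^ 2 = 21 := Real.sq_sqrt (by norm_num)
  have h21n : (0:ℝ) ≤ Real.sqrt 21 := Real.sqrt_nonneg 21
  have h21lt : Real.sqrt 21 < 5 := by nlinarith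
  have h21gt : 3 < Real.sqrt 21 := by nlinarith
  have hγhalf : γ < 1/2 := by linarith
  set s := Real.sqrt (3*γ/2) with hs
  have hs0 : 0 < s := Real.sqrt_pos.mpr (by linarith)
  have hs2 : s^2 = 3*γ/2 := Real.sq_sqrt (by linarith)
  have hkey : 4*γ^2 - 10*γ + 1 > 0 := by
    nlinarith [mul_pos (show 0 < (5 - Real.sqrt 21)/4 - γ from by linarith)
      (show 0 < (5 + Real.sqrt 21)/4 - γ from by nlinarith)]
  have hsμ0 : s < 1/2 - γ := by nlinarith [hs2, hs0]
  have hγs : γ < s := by nlinarith [hs2, hs0]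
  set μ := (1/2 - γ + s)/2 with hμdef
  have hμγ : γ < μ := by simp only [hμdef]; linarith
  have hμlt : μ < 1/2 - γ := by simp only [hμdef]; linarith
  have hμpos : 0 < μ := lt_trans hγ0 hμγ
  have hμs : s < μ := by simp only [hμdef]; linarith
  have h2μ2 : 3*γ < 2*μ^2 := by nlinarith [mul_pos (sub_pos.mpr hμs) (by linarith : 0 < μ + s)]
  set q := (3/(2*μ) + μ/γ)/2 with hqdef
  have h3lt : 3/(2*μ) < μ/γ := by
    rw [div_lt_div_iff₀ (by positivity) hγ0]; nlinarith
  have hqlow : 3/(2*μ) < q := by simp only [hqdef]; linarith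
  have hqhigh : q < μ/γ := by simp only [hqdef]; linarith
  have hqpos : 0 < q := lt_trans (by positivity) hqlow
  have hq3 : 3 < 2*μ*q := by
    rw [div_lt_iff₀ (by positivity)] at hqlow; linarith
  have hq1 : 1 < q := by nlinarith [hq3]
  have hqγμ : γ * q < μ := by
    rw [mul_comm]; exact (lt_div_iff₀ hγ0).mp hqhigh
  refine ⟨μ, q, hμγ, hμlt, hq1, hqhigh, ?_⟩
  simp only
  have h2q : (0:ℝ) < 1/(2*q) := by positivity
  have hκμ : 1/(2*q) < μ := by rw [div_lt_iff₀ (by positivity)]; nlinarith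
  refine ⟨by linarith, by linarith, ?_, ?_⟩
  · have hd : 1 - (1 + 1/(2*q) - μ) = (2*q*μ - 1)/(2*q) := by
      field_simp; ring
    have h2qμ : (0:ℝ) < 2*q*μ - 1 := by nlinarith
    rw [hd, one_div_div, div_mul_div_comm, div_lt_iff₀ (by positivity)]
    nlinarith
  · have h1q : (0:ℝ) < 1 - 1/q := by
      have : 1/q < 1 := by rw [div_lt_one hqpos]; exact hq1
      linarith
    rw [mul_one_div, div_lt_one h1q]
    have hsplit : (1+2*μ)/q = 1/q + 2*μ/q := by ring
    have h2 : 2*γ < 2*μ/q := by rw [lt_div_iff₀ hqpos]; nlinarith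
    linarith [hsplit, h2]
end

section
/- Let γ ≥ 0 and μ < 1/2 − γ be real numbers. Then there exists a constant C = C(γ, μ) > 0 such that for every sequence a : ℤ → ℝ one has ∑_{m∈ℤ} ⟨m⟩^{2(μ−1)} ∑_{k∈ℤ} ⟨k⟩^{2γ} a(k−m)² ≤ C · ∑_{k∈ℤ} ⟨k⟩^{2γ} a(k)², where all sums of nonnegative terms are taken in [0,∞]. -/
/-- Fourier-coefficient form of the key bound (eq:krylov-type): for `γ ≥ 0`,
`μ < 1/2 − γ`, there is `C > 0` with
`∑_m ⟨m⟩^{2(μ−1)} ∑_k ⟨k⟩^{2γ} a(k−m)² ≤ C ∑_k ⟨k⟩^{2γ} a(k)²`. -/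
theorem stmt12 (γ μ : ℝ) (hγ : 0 ≤ γ) (hμ : μ < 1 / 2 - γ) :
    ∃ C : ℝ, 0 < C ∧ ∀ a : ℤ → ℝ,
      ∑' m : ℤ, ∑' k : ℤ,
          ENNReal.ofReal
            ((1 + (m : ℝ) ^ 2) ^ (μ - 1) * ((1 + (k : ℝ) ^ 2) ^ γ * a (k - m) ^ 2))
        ≤ ENNReal.ofReal C *
            ∑' k : ℤ, ENNReal.ofReal ((1 + (k : ℝ) ^ 2) ^ γ * a k ^ 2) := by
  set s : ℝ := μ - 1 + γ with hs_def
  have hs : s < -(1/2) := by rw [hs_def]; linarith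
  -- summability of m ↦ (1+m²)^s
  have hsum : Summable (fun m : ℤ => (1 + (m:ℝ)^2) ^ s) := by
    have hb : (1:ℝ) < -(2*s) := by linarith
    have h1 : Summable (fun m : ℤ => |(m:ℝ)| ^ (2*s)) := by
      have := Real.summable_abs_int_rpow hb
      simpa using this
    have h2 : Summable (fun m : ℤ => if m = 0 then (1:ℝ) else 0) := by
      apply summable_of_ne_finset_zero (s := ({0} : Finset ℤ))
      intro m hm
      simp only [Finset.mem_singleton] at hm
      simp [hm]
    refine Summable.of_nonneg_of_le
      (fun m => Real.rpow_nonneg (by positivity) s) ?_ (h1.add h2)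
    intro m
    by_cases hm : m = 0
    · simp [hm]
      exact Real.rpow_nonneg le_rfl _
    · have hmne : ((m:ℝ)) ≠ 0 := Int.cast_ne_zero.mpr hm
      have hm2 : (0:ℝ) < (m:ℝ)^2 := by positivity
      have h3 : (1 + (m:ℝ)^2) ^ s ≤ ((m:ℝ)^2) ^ s :=
        Real.rpow_le_rpow_of_nonpos hm2 (by linarith) (by linarith)
      have h4 : ((m:ℝ)^2) ^ s = |(m:ℝ)| ^ (2*s) := by
        rw [← sq_abs, Real.rpow_mul (abs_nonneg _)]
        norm_num [Real.rpow_two]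
      have : (0:ℝ) ≤ if m = 0 then (1:ℝ) else 0 := by positivity
      calc (1 + (m:ℝ)^2) ^ s ≤ |(m:ℝ)| ^ (2*s) := h4 ▸ h3
        _ ≤ |(m:ℝ)| ^ (2*s) + if m = 0 then (1:ℝ) else 0 := by linarith
  -- the constant
  set T : ℝ := ∑' m : ℤ, (1 + (m:ℝ)^2) ^ s with hT
  have hTpos : 0 < T := by
    refine Summable.tsum_pos hsum (fun m => Real.rpow_nonneg (by positivity) s) 0 ?_
    norm_num
  refine ⟨2 ^ γ * T, by positivity, fun a => ?_⟩
  set b : ℤ → ENNReal := fun k => ENNReal.ofReal ((1 + (k:ℝ)^2)^γ * a k ^ 2) with hbdef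
  set S : ENNReal := ∑' k : ℤ, b k with hS
  -- pointwise bound
  have key : ∀ m k : ℤ,
      ENNReal.ofReal ((1 + (m : ℝ) ^ 2) ^ (μ - 1) * ((1 + (k : ℝ) ^ 2) ^ γ * a (k - m) ^ 2))
        ≤ ENNReal.ofReal (2 ^ γ * (1 + (m:ℝ)^2) ^ s) * b (k - m) := by
    intro m k
    rw [hbdef]
    rw [← ENNReal.ofReal_mul (by positivity)]
    apply ENNReal.ofReal_le_ofReal
    have hcast : ((k - m : ℤ) : ℝ) = (k:ℝ) - (m:ℝ) := by push_cast; ring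
    rw [hcast]
    set x := (m:ℝ); set y := (k:ℝ)
    have hx : (0:ℝ) < 1 + x^2 := by positivity
    have hyx : (0:ℝ) < 1 + (y-x)^2 := by positivity
    have hbase : 1 + y^2 ≤ 2 * (1 + x^2) * (1 + (y-x)^2) := by
      nlinarith [sq_nonneg (y - 2*x), sq_nonneg (x*(y-x))]
    have h5 : (1 + y^2)^γ ≤ (2 * (1 + x^2) * (1 + (y-x)^2))^γ :=
      Real.rpow_le_rpow (by positivity) hbase hγ
    have h6 : (2 * (1 + x^2) * (1 + (y-x)^2))^γ
        = 2^γ * (1 + x^2)^γ * (1 + (y-x)^2)^γ := by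
      rw [Real.mul_rpow (by positivity) (by positivity),
        Real.mul_rpow (by norm_num) (by positivity)]
    have h7 : (1 + x^2)^(μ-1) * (1 + x^2)^γ = (1 + x^2)^s := by
      rw [← Real.rpow_add hx, hs_def]
    have hpow : (0:ℝ) ≤ (1 + x^2)^(μ-1) := Real.rpow_nonneg hx.le _
    have hA : (0:ℝ) ≤ a (k - m) ^ 2 := sq_nonneg _
    calc (1 + x^2)^(μ-1) * ((1 + y^2)^γ * a (k-m)^2)
        ≤ (1 + x^2)^(μ-1) * ((2^γ * (1 + x^2)^γ * (1 + (y-x)^2)^γ) * a (k-m)^2) := by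
          apply mul_le_mul_of_nonneg_left _ hpow
          exact mul_le_mul_of_nonneg_right (h6 ▸ h5) hA
      _ = 2^γ * (1 + x^2)^s * ((1 + (y-x)^2)^γ * a (k-m)^2) := by
          rw [← h7]; ring
  -- inner sum bound
  have inner : ∀ m : ℤ,
      (∑' k : ℤ, ENNReal.ofReal
          ((1 + (m : ℝ) ^ 2) ^ (μ - 1) * ((1 + (k : ℝ) ^ 2) ^ γ * a (k - m) ^ 2)))
        ≤ ENNReal.ofReal (2 ^ γ * (1 + (m:ℝ)^2) ^ s) * S := by
    intro m
    calc (∑' k : ℤ, ENNReal.ofReal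
          ((1 + (m : ℝ) ^ 2) ^ (μ - 1) * ((1 + (k : ℝ) ^ 2) ^ γ * a (k - m) ^ 2)))
        ≤ ∑' k : ℤ, ENNReal.ofReal (2 ^ γ * (1 + (m:ℝ)^2) ^ s) * b (k - m) :=
          ENNReal.tsum_le_tsum (fun k => key m k)
      _ = ENNReal.ofReal (2 ^ γ * (1 + (m:ℝ)^2) ^ s) * ∑' k : ℤ, b (k - m) :=
          ENNReal.tsum_mul_left
      _ = ENNReal.ofReal (2 ^ γ * (1 + (m:ℝ)^2) ^ s) * S := by
          congr 1
          rw [hS]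
          exact (Equiv.subRight m).tsum_eq b
  calc (∑' m : ℤ, ∑' k : ℤ, ENNReal.ofReal
        ((1 + (m : ℝ) ^ 2) ^ (μ - 1) * ((1 + (k : ℝ) ^ 2) ^ γ * a (k - m) ^ 2)))
      ≤ ∑' m : ℤ, ENNReal.ofReal (2 ^ γ * (1 + (m:ℝ)^2) ^ s) * S :=
        ENNReal.tsum_le_tsum inner
    _ = (∑' m : ℤ, ENNReal.ofReal (2 ^ γ * (1 + (m:ℝ)^2) ^ s)) * S :=
        ENNReal.tsum_mul_right
    _ = ENNReal.ofReal (2 ^ γ * T) * S := by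
        congr 1
        rw [← ENNReal.ofReal_tsum_of_nonneg (fun m => by positivity)
          (hsum.mul_left _), hT, tsum_mul_left]
end

section
/- Let γ ∈ [0, 1/4), μ ∈ (γ, 1/2−γ), and ε > 0. Then there exists a constant C = C(γ, μ, ε) > 0 such that for every sequence a : ℤ → ℝ one has ∑_{m∈ℤ} ⟨m⟩^{2(μ−1)} ∑_{k∈ℤ} ⟨k⟩^{2γ} a(k−m)² ≤ ε·∑_{k∈ℤ} ⟨k⟩^{2μ} a(k)² + C·∑_{k∈ℤ} ⟨k⟩^{2(μ−1)} a(k)², where all sums of nonnegative terms are taken in [0,∞]. -/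
/-!
Substituting `k = n + m` in the inner sum and using Peetre's inequality
`⟨n + m⟩^{2γ} ≤ 2^γ ⟨n⟩^{2γ} ⟨m⟩^{2γ}`, the left side is at most
`(∑_m 2^γ ⟨m⟩^{2(μ-1+γ)}) · ∑_n ⟨n⟩^{2γ} a(n)²`, whose first factor `K` is finite exactly
because `μ < 1/2 - γ`. Since `μ - 1 < γ < μ`, the weight `⟨n⟩^{2γ}` interpolates:
`x^γ ≤ (ε/K) x^μ + C' x^(μ-1)` for `x > 0`, and multiplying by `K` gives the claim.
-/

open scoped ENNReal

namespace Real

theorem summable_one_add_sq_rpow {s : ℝ} (hs : s < -(1 / 2)) :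
    Summable fun n : ℤ => (1 + (n : ℝ) ^ 2) ^ s := by
  refine .of_norm_bounded_eventually (summable_abs_int_rpow (b := -(2 * s)) (by linarith)) ?_
  filter_upwards [Filter.eventually_cofinite_ne 0] with n hn
  have hn_sq : 0 < (n : ℝ) ^ 2 := sq_pos_of_ne_zero (Int.cast_ne_zero.2 hn)
  rw [norm_of_nonneg (by positivity), neg_neg, rpow_mul (abs_nonneg _),
    rpow_two, sq_abs]
  exact rpow_le_rpow_of_nonpos hn_sq (by linarith) (by linarith)

theorem one_add_sq_add_rpow_le (x y : ℝ) {γ : ℝ} (hγ : 0 ≤ γ) :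
    (1 + (x + y) ^ 2) ^ γ ≤ 2 ^ γ * (1 + x ^ 2) ^ γ * (1 + y ^ 2) ^ γ := by
  have h : 1 + (x + y) ^ 2 ≤ 2 * (1 + x ^ 2) * (1 + y ^ 2) := by
    nlinarith [sq_nonneg (x - y), sq_nonneg (x * y)]
  calc (1 + (x + y) ^ 2) ^ γ ≤ (2 * (1 + x ^ 2) * (1 + y ^ 2)) ^ γ :=
        rpow_le_rpow (by positivity) h hγ
    _ = 2 ^ γ * (1 + x ^ 2) ^ γ * (1 + y ^ 2) ^ γ := by
        rw [mul_rpow (by positivity) (by positivity),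
          mul_rpow (by norm_num) (by positivity)]

theorem exists_rpow_le_mul_rpow_add_mul_rpow {p q r e : ℝ} (hpq : p ≤ q) (hqr : q < r)
    (he : 0 < e) :
    ∃ C : ℝ, 0 < C ∧ ∀ x : ℝ, 0 < x → x ^ q ≤ e * x ^ r + C * x ^ p := by
  -- `T` is the point where `x ^ q = e * x ^ r`.
  set T : ℝ := e ^ (q - r)⁻¹
  have hT : 0 < T := rpow_pos_of_pos he _
  refine ⟨T ^ (q - p), rpow_pos_of_pos hT _, fun x hx => ?_⟩
  have hxr : 0 ≤ e * x ^ r := by positivity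
  have hxp : 0 ≤ T ^ (q - p) * x ^ p := by positivity
  rcases le_or_gt T x with hTx | hxT
  · have hle : x ^ (q - r) ≤ e := by
      calc x ^ (q - r) ≤ T ^ (q - r) := rpow_le_rpow_of_nonpos hT hTx (by linarith)
        _ = e := rpow_inv_rpow he.le (by linarith)
    calc x ^ q = x ^ (q - r) * x ^ r := by rw [← rpow_add hx, sub_add_cancel]
      _ ≤ e * x ^ r := by gcongr
      _ ≤ e * x ^ r + T ^ (q - p) * x ^ p := le_add_of_nonneg_right hxp
  · calc x ^ q = x ^ (q - p) * x ^ p := by rw [← rpow_add hx, sub_add_cancel]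
      _ ≤ T ^ (q - p) * x ^ p := by gcongr
      _ ≤ e * x ^ r + T ^ (q - p) * x ^ p := le_add_of_nonneg_left hxr

end Real

namespace ENNReal

theorem tsum_tsum_le_tsum_mul_tsum_of_le {G : Type*} [AddGroup G] {F : G → G → ℝ≥0∞}
    {c d : G → ℝ≥0∞} (h : ∀ m n, F m (n + m) ≤ c m * d n) :
    ∑' m, ∑' k, F m k ≤ (∑' m, c m) * ∑' n, d n := by
  calc ∑' m, ∑' k, F m k = ∑' m, ∑' n, F m (n + m) :=
        tsum_congr fun m => ((Equiv.addRight m).tsum_eq (F m)).symm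
    _ ≤ ∑' m, ∑' n, c m * d n := ENNReal.tsum_le_tsum fun m => ENNReal.tsum_le_tsum (h m)
    _ = (∑' m, c m) * ∑' n, d n := by simp_rw [ENNReal.tsum_mul_left, ENNReal.tsum_mul_right]

theorem tsum_ofReal_le_of_le_add {ι : Type*} {f g h : ι → ℝ} {e C : ℝ} (he : 0 ≤ e)
    (hC : 0 ≤ C) (hfgh : ∀ i, f i ≤ e * g i + C * h i) :
    ∑' i, ENNReal.ofReal (f i)
      ≤ ENNReal.ofReal e * ∑' i, ENNReal.ofReal (g i)
        + ENNReal.ofReal C * ∑' i, ENNReal.ofReal (h i) := by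
  calc ∑' i, ENNReal.ofReal (f i)
      ≤ ∑' i, (ENNReal.ofReal e * ENNReal.ofReal (g i)
          + ENNReal.ofReal C * ENNReal.ofReal (h i)) :=
        ENNReal.tsum_le_tsum fun i => (ENNReal.ofReal_le_ofReal (hfgh i)).trans <| by
          rw [← ENNReal.ofReal_mul he, ← ENNReal.ofReal_mul hC]
          exact ENNReal.ofReal_add_le
    _ = _ := by rw [ENNReal.tsum_add, ENNReal.tsum_mul_left, ENNReal.tsum_mul_left]

end ENNReal

theorem tsum_tsum_weighted_shift_le (β : ℝ) {γ : ℝ} (hγ : 0 ≤ γ) (a : ℤ → ℝ) :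
    ∑' m : ℤ, ∑' k : ℤ,
        ENNReal.ofReal ((1 + (m : ℝ) ^ 2) ^ β * ((1 + (k : ℝ) ^ 2) ^ γ * a (k - m) ^ 2))
      ≤ (∑' m : ℤ, ENNReal.ofReal (2 ^ γ * (1 + (m : ℝ) ^ 2) ^ (β + γ)))
        * ∑' n : ℤ, ENNReal.ofReal ((1 + (n : ℝ) ^ 2) ^ γ * a n ^ 2) := by
  refine ENNReal.tsum_tsum_le_tsum_mul_tsum_of_le fun m n => ?_
  rw [add_sub_cancel_right, ← ENNReal.ofReal_mul (by positivity)]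
  refine ENNReal.ofReal_le_ofReal ?_
  have hpeetre := Real.one_add_sq_add_rpow_le n m hγ
  push_cast
  calc _ ≤ (1 + (m : ℝ) ^ 2) ^ β
          * (2 ^ γ * (1 + (n : ℝ) ^ 2) ^ γ * (1 + (m : ℝ) ^ 2) ^ γ * a n ^ 2) := by
        gcongr
    _ = 2 ^ γ * (1 + (m : ℝ) ^ 2) ^ (β + γ) * ((1 + (n : ℝ) ^ 2) ^ γ * a n ^ 2) := by
        rw [Real.rpow_add (by positivity)]; ring

theorem stmt17_general (γ μ ε : ℝ) (hγ0 : 0 ≤ γ)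
    (hμ0 : γ < μ) (hμ1 : μ < 1 / 2 - γ) (hε : 0 < ε) :
    ∃ C : ℝ, 0 < C ∧ ∀ a : ℤ → ℝ,
      ∑' m : ℤ, ∑' k : ℤ,
          ENNReal.ofReal
            ((1 + (m : ℝ) ^ 2) ^ (μ - 1) * ((1 + (k : ℝ) ^ 2) ^ γ * a (k - m) ^ 2))
        ≤ ENNReal.ofReal ε * ∑' k : ℤ, ENNReal.ofReal ((1 + (k : ℝ) ^ 2) ^ μ * a k ^ 2)
          + ENNReal.ofReal C *
              ∑' k : ℤ, ENNReal.ofReal ((1 + (k : ℝ) ^ 2) ^ (μ - 1) * a k ^ 2) := by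
  have hsum : Summable fun m : ℤ => 2 ^ γ * (1 + (m : ℝ) ^ 2) ^ (μ - 1 + γ) :=
    (Real.summable_one_add_sq_rpow (by linarith)).mul_left _
  set K := ∑' m : ℤ, 2 ^ γ * (1 + (m : ℝ) ^ 2) ^ (μ - 1 + γ)
  have hK : 0 < K := hsum.tsum_pos (fun _ => by positivity) 0 (by positivity)
  obtain ⟨C', hC', hinterp⟩ := Real.exists_rpow_le_mul_rpow_add_mul_rpow (p := μ - 1)
    (by linarith) hμ0 (div_pos hε hK)
  refine ⟨K * C', mul_pos hK hC', fun a => ?_⟩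
  have hconv := tsum_tsum_weighted_shift_le (μ - 1) hγ0 a
  rw [← ENNReal.ofReal_tsum_of_nonneg (fun _ => by positivity) hsum] at hconv
  have hweight := ENNReal.tsum_ofReal_le_of_le_add (div_pos hε hK).le hC'.le
    (g := fun n : ℤ => (1 + (n : ℝ) ^ 2) ^ μ * a n ^ 2)
    (h := fun n : ℤ => (1 + (n : ℝ) ^ 2) ^ (μ - 1) * a n ^ 2) fun n =>
    calc (1 + (n : ℝ) ^ 2) ^ γ * a n ^ 2
        ≤ (ε / K * (1 + (n : ℝ) ^ 2) ^ μ + C' * (1 + (n : ℝ) ^ 2) ^ (μ - 1))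
            * a n ^ 2 := by
          gcongr; exact hinterp _ (by positivity)
      _ = _ := by ring
  calc _ ≤ _ := hconv
    _ ≤ ENNReal.ofReal K * (ENNReal.ofReal (ε / K) * _ + ENNReal.ofReal C' * _) := by gcongr
    _ = _ := by
        rw [mul_add, ← mul_assoc, ← mul_assoc, ← ENNReal.ofReal_mul hK.le,
          ← ENNReal.ofReal_mul hK.le, mul_div_cancel₀ _ hK.ne']

/-- Combined key bound and interpolation (Remark 1.5 of the paper): for
`γ ∈ [0,1/4)`, `μ ∈ (γ, 1/2−γ)`, `ε > 0` there is `C > 0` with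
`∑_m ⟨m⟩^{2(μ−1)} ∑_k ⟨k⟩^{2γ} a(k−m)² ≤ ε ∑ ⟨k⟩^{2μ} a(k)² + C ∑ ⟨k⟩^{2(μ−1)} a(k)²`. -/
theorem stmt17 (γ μ ε : ℝ) (hγ0 : 0 ≤ γ) (hγ1 : γ < 1 / 4)
    (hμ0 : γ < μ) (hμ1 : μ < 1 / 2 - γ) (hε : 0 < ε) :
    ∃ C : ℝ, 0 < C ∧ ∀ a : ℤ → ℝ,
      ∑' m : ℤ, ∑' k : ℤ,
          ENNReal.ofReal
            ((1 + (m : ℝ) ^ 2) ^ (μ - 1) * ((1 + (k : ℝ) ^ 2) ^ γ * a (k - m) ^ 2))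
        ≤ ENNReal.ofReal ε * ∑' k : ℤ, ENNReal.ofReal ((1 + (k : ℝ) ^ 2) ^ μ * a k ^ 2)
          + ENNReal.ofReal C *
              ∑' k : ℤ, ENNReal.ofReal ((1 + (k : ℝ) ^ 2) ^ (μ - 1) * a k ^ 2) :=
  stmt17_general γ μ ε hγ0 hμ0 hμ1 hε
end

section
/- Let α > 0, β ∈ (0,1), ε > 0, and let I = [0, 2π] ⊂ ℝ. Then there exists a constant C = C(α, β, ε) > 0 such that for every F ≥ 0, every f : ℝ → ℝ satisfying |f(u) − f(v)| ≤ F|u−v|^β for all u, v ∈ ℝ, and every measurable g : I → ℝ, one has ∫_I ∫_I |f(g(x)) − f(g(y))|² / |x−y|^{1+2α} dx dy ≤ C·F²·(∫_I ∫_I |g(x) − g(y)|² / |x−y|^{1+2(α/β+ε)} dx dy)^β, where both sides are taken in [0,∞]. -/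
/-!
With `c = 1 + 2(α/β + ε)` and `e = -1 + 2εβ/(1-β)` one has `1 + 2α = cβ - e(1-β)`, so the
Hölder bound on `f` gives, pointwise on `I × I`,
`|f(g x) - f(g y)|² / |x-y|^(1+2α) ≤ F² K(x,y)^β (|x-y|^e)^(1-β)`,
where `K(x,y) = |g x - g y|² / |x-y|^c`. Hölder's inequality with exponents `1/β` and `1/(1-β)`
then bounds the left-hand side by `F² (∬ K)^β (∬ |x-y|^e)^(1-β)`, and the last factor is
finite because `e > -1`.
-/

open MeasureTheory Set Metric

section RieszKernel

variable {E : Type*} [NormedAddCommGroup E] [NormedSpace ℝ E] [FiniteDimensional ℝ E]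
  [Nontrivial E] [MeasurableSpace E] [BorelSpace E] (μ : Measure E) [μ.IsAddHaarMeasure]
  {r : ℝ}

theorem setLIntegral_closedBall_norm_rpow_lt_top (hr : -(Module.finrank ℝ E : ℝ) < r) (R : ℝ) :
    ∫⁻ t in closedBall 0 R, ENNReal.ofReal (‖t‖ ^ r) ∂μ < ⊤ := by
  have hloc : LocallyIntegrable (fun t : E => ‖t‖ ^ r) μ :=
    locallyIntegrable_of_norm_le_rpow (C := 1) (α := -r) Module.finrank_pos (by linarith)
      (ae_of_all _ fun t => by simp [abs_of_nonneg (Real.rpow_nonneg (norm_nonneg t) r)])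
      (measurable_norm.pow_const r).aestronglyMeasurable
  exact (hloc.integrableOn_isCompact (isCompact_closedBall 0 R)).lintegral_lt_top

theorem lintegral_lintegral_closedBall_norm_sub_rpow_lt_top
    (hr : -(Module.finrank ℝ E : ℝ) < r) (R : ℝ) :
    ∫⁻ x in closedBall 0 R, ∫⁻ y in closedBall 0 R, ENNReal.ofReal (‖x - y‖ ^ r) ∂μ ∂μ < ⊤ := by
  set φ : E → ENNReal := (closedBall 0 (2 * R)).indicator fun t => ENNReal.ofReal (‖t‖ ^ r)
  have hφ : ∫⁻ t, φ t ∂μ < ⊤ := by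
    rw [lintegral_indicator measurableSet_closedBall]
    exact setLIntegral_closedBall_norm_rpow_lt_top μ hr _
  have hinner : ∀ x ∈ closedBall (0 : E) R,
      ∫⁻ y in closedBall 0 R, ENNReal.ofReal (‖x - y‖ ^ r) ∂μ ≤ ∫⁻ t, φ t ∂μ := by
    intro x hx
    calc ∫⁻ y in closedBall 0 R, ENNReal.ofReal (‖x - y‖ ^ r) ∂μ
        = ∫⁻ y in closedBall 0 R, φ (y - x) ∂μ := by
          refine setLIntegral_congr_fun measurableSet_closedBall fun y hy => ?_
          have hyx : y - x ∈ closedBall (0 : E) (2 * R) := by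
            rw [mem_closedBall_zero_iff] at hx hy ⊢
            linarith [norm_sub_le y x]
          simp only [φ, indicator_of_mem hyx, norm_sub_rev]
      _ ≤ ∫⁻ y, φ (y - x) ∂μ := setLIntegral_le_lintegral _ _
      _ = ∫⁻ t, φ t ∂μ := lintegral_sub_right_eq_self φ x
  calc ∫⁻ x in closedBall 0 R, ∫⁻ y in closedBall 0 R, ENNReal.ofReal (‖x - y‖ ^ r) ∂μ ∂μ
      ≤ ∫⁻ _ in closedBall 0 R, ∫⁻ t, φ t ∂μ ∂μ :=
        setLIntegral_mono' measurableSet_closedBall hinner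
    _ = (∫⁻ t, φ t ∂μ) * μ (closedBall 0 R) := setLIntegral_const _ _
    _ < ⊤ := ENNReal.mul_lt_top hφ measure_closedBall_lt_top

theorem lintegral_lintegral_norm_sub_rpow_lt_top (hr : -(Module.finrank ℝ E : ℝ) < r)
    {s : Set E} (hs : Bornology.IsBounded s) :
    ∫⁻ x in s, ∫⁻ y in s, ENNReal.ofReal (‖x - y‖ ^ r) ∂μ ∂μ < ⊤ := by
  obtain ⟨R, hR⟩ := hs.subset_closedBall 0
  refine lt_of_le_of_lt ?_ (lintegral_lintegral_closedBall_norm_sub_rpow_lt_top μ hr R)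
  exact (lintegral_mono_set hR).trans (lintegral_mono fun x => lintegral_mono_set hR)

end RieszKernel

theorem lintegral_lintegral_rpow_mul_rpow_le {X Y : Type*} [MeasurableSpace X] [MeasurableSpace Y]
    {μ : Measure X} {ν : Measure Y} [SFinite ν] {f g : X → Y → ENNReal}
    (hf : AEMeasurable (Function.uncurry f) (μ.prod ν))
    (hg : AEMeasurable (Function.uncurry g) (μ.prod ν))
    {p q : ℝ} (hp : 0 ≤ p) (hq : 0 ≤ q) (hpq : p + q = 1) :
    ∫⁻ x, ∫⁻ y, f x y ^ p * g x y ^ q ∂ν ∂μ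
      ≤ (∫⁻ x, ∫⁻ y, f x y ∂ν ∂μ) ^ p * (∫⁻ x, ∫⁻ y, g x y ∂ν ∂μ) ^ q := by
  calc ∫⁻ x, ∫⁻ y, f x y ^ p * g x y ^ q ∂ν ∂μ
      = ∫⁻ z, Function.uncurry f z ^ p * Function.uncurry g z ^ q ∂μ.prod ν :=
        (lintegral_prod (fun z => _ ^ p * _ ^ q) ((hf.pow_const p).mul (hg.pow_const q))).symm
    _ ≤ _ := ENNReal.lintegral_mul_norm_pow_le hf hg hp hq hpq
    _ = _ := by rw [lintegral_prod _ hf, lintegral_prod _ hg]; rfl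

theorem div_rpow_mul_rpow_eq {d u β a c e : ℝ} (hd : 0 < d) (hu : 0 ≤ u)
    (ha : a = c * β - e * (1 - β)) :
    (u / d ^ c) ^ β * (d ^ e) ^ (1 - β) = u ^ β / d ^ a := by
  rw [Real.div_rpow hu (Real.rpow_nonneg hd.le c), ← Real.rpow_mul hd.le, ← Real.rpow_mul hd.le,
    ha, Real.rpow_sub hd]
  field_simp

theorem ofReal_sq_div_rpow_le {s t d F β a c e : ℝ} (hβ0 : 0 ≤ β) (hβ1 : β ≤ 1) (hd : 0 < d)
    (ht : 0 ≤ t) (hst : |s| ≤ F * t ^ β) (ha : a = c * β - e * (1 - β)) :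
    ENNReal.ofReal (|s| ^ 2) / ENNReal.ofReal (d ^ a)
      ≤ ENNReal.ofReal (F ^ 2) *
        ((ENNReal.ofReal (t ^ 2) / ENNReal.ofReal (d ^ c)) ^ β
          * ENNReal.ofReal (d ^ e) ^ (1 - β)) := by
  have hreal : |s| ^ 2 / d ^ a ≤ F ^ 2 * ((t ^ 2 / d ^ c) ^ β * (d ^ e) ^ (1 - β)) := by
    rw [div_rpow_mul_rpow_eq hd (sq_nonneg t) ha, mul_div_assoc']
    gcongr
    calc |s| ^ 2 ≤ (F * t ^ β) ^ 2 := pow_le_pow_left₀ (abs_nonneg s) hst 2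
      _ = F ^ 2 * (t ^ 2) ^ β := by
        rw [mul_pow, ← Real.rpow_mul_natCast ht, ← Real.rpow_natCast_mul ht, mul_comm β]
  rw [← ENNReal.ofReal_div_of_pos (Real.rpow_pos_of_pos hd _),
    ← ENNReal.ofReal_div_of_pos (Real.rpow_pos_of_pos hd _),
    ENNReal.ofReal_rpow_of_nonneg (by positivity) hβ0,
    ENNReal.ofReal_rpow_of_nonneg (by positivity) (by linarith),
    ← ENNReal.ofReal_mul (by positivity), ← ENNReal.ofReal_mul (by positivity)]
  exact ENNReal.ofReal_le_ofReal hreal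

theorem ofReal_sq_comp_sub_div_rpow_le {f g : ℝ → ℝ} {F β a c e : ℝ} (hβ0 : 0 ≤ β) (hβ1 : β ≤ 1)
    (hf : ∀ u v : ℝ, |f u - f v| ≤ F * |u - v| ^ β) (ha : a = c * β - e * (1 - β)) (x y : ℝ) :
    ENNReal.ofReal (|f (g x) - f (g y)| ^ 2) / ENNReal.ofReal (|x - y| ^ a)
      ≤ ENNReal.ofReal (F ^ 2) *
        ((ENNReal.ofReal (|g x - g y| ^ 2) / ENNReal.ofReal (|x - y| ^ c)) ^ β
          * ENNReal.ofReal (|x - y| ^ e) ^ (1 - β)) := by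
  rcases eq_or_ne x y with rfl | hxy
  · simp
  exact ofReal_sq_div_rpow_le hβ0 hβ1 (abs_pos.2 (sub_ne_zero.2 hxy)) (abs_nonneg _) (hf _ _) ha

theorem lintegral_lintegral_comp_sub_div_rpow_le {μ : Measure ℝ} [SFinite μ] {f g : ℝ → ℝ}
    {F β a c e : ℝ} (hβ0 : 0 ≤ β) (hβ1 : β ≤ 1) (hf : ∀ u v : ℝ, |f u - f v| ≤ F * |u - v| ^ β)
    (hg : Measurable g) (ha : a = c * β - e * (1 - β)) :
    ∫⁻ x, ∫⁻ y, ENNReal.ofReal (|f (g x) - f (g y)| ^ 2) / ENNReal.ofReal (|x - y| ^ a) ∂μ ∂μ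
      ≤ ENNReal.ofReal (F ^ 2) *
        ((∫⁻ x, ∫⁻ y, ENNReal.ofReal (|g x - g y| ^ 2) / ENNReal.ofReal (|x - y| ^ c) ∂μ ∂μ) ^ β
          * (∫⁻ x, ∫⁻ y, ENNReal.ofReal (|x - y| ^ e) ∂μ ∂μ) ^ (1 - β)) := by
  calc ∫⁻ x, ∫⁻ y, ENNReal.ofReal (|f (g x) - f (g y)| ^ 2) / ENNReal.ofReal (|x - y| ^ a) ∂μ ∂μ
      ≤ ∫⁻ x, ∫⁻ y, ENNReal.ofReal (F ^ 2) *
          ((ENNReal.ofReal (|g x - g y| ^ 2) / ENNReal.ofReal (|x - y| ^ c)) ^ β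
            * ENNReal.ofReal (|x - y| ^ e) ^ (1 - β)) ∂μ ∂μ :=
        lintegral_mono fun x => lintegral_mono fun y =>
          ofReal_sq_comp_sub_div_rpow_le hβ0 hβ1 hf ha x y
    _ ≤ _ := by
        simp_rw [lintegral_const_mul' _ _ ENNReal.ofReal_ne_top]
        gcongr
        exact lintegral_lintegral_rpow_mul_rpow_le (by fun_prop) (by fun_prop) hβ0
          (by linarith) (by ring)

theorem stmt19_general (α β ε : ℝ) (hβ0 : 0 < β) (hβ1 : β < 1) (hε : 0 < ε) :
    ∃ C : ℝ, 0 < C ∧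
      ∀ F : ℝ, 0 ≤ F → ∀ f : ℝ → ℝ,
        (∀ u v : ℝ, |f u - f v| ≤ F * |u - v| ^ β) →
        ∀ g : ℝ → ℝ, Measurable g →
          (∫⁻ x in Set.Icc (0 : ℝ) (2 * Real.pi), ∫⁻ y in Set.Icc (0 : ℝ) (2 * Real.pi),
              ENNReal.ofReal (|f (g x) - f (g y)| ^ 2)
                / ENNReal.ofReal (|x - y| ^ (1 + 2 * α)))
            ≤ ENNReal.ofReal (C * F ^ 2) *
              (∫⁻ x in Set.Icc (0 : ℝ) (2 * Real.pi), ∫⁻ y in Set.Icc (0 : ℝ) (2 * Real.pi),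
                  ENNReal.ofReal (|g x - g y| ^ 2)
                    / ENNReal.ofReal (|x - y| ^ (1 + 2 * (α / β + ε)))) ^ β := by
  have h1β : 0 < 1 - β := sub_pos.2 hβ1
  set e : ℝ := -1 + 2 * ε * β / (1 - β) with he
  have he1 : -1 < e := by
    have : 0 < 2 * ε * β / (1 - β) := by positivity
    linarith
  have hexp : 1 + 2 * α = (1 + 2 * (α / β + ε)) * β - e * (1 - β) := by
    rw [he]; field_simp; ring
  set I := Set.Icc (0 : ℝ) (2 * Real.pi)
  set κ := ∫⁻ x in I, ∫⁻ y in I, ENNReal.ofReal (|x - y| ^ e)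
  have hκ : κ ^ (1 - β) ≠ ⊤ := by
    refine ENNReal.rpow_ne_top_of_nonneg h1β.le (ne_of_lt ?_)
    simpa [Real.norm_eq_abs] using lintegral_lintegral_norm_sub_rpow_lt_top volume
      (by simpa using he1) (isBounded_Icc 0 (2 * Real.pi))
  obtain ⟨C, hC0, hκC⟩ : ∃ C : ℝ, 0 < C ∧ κ ^ (1 - β) ≤ ENNReal.ofReal C :=
    ⟨(κ ^ (1 - β)).toReal + 1, by positivity,
      (ENNReal.le_ofReal_iff_toReal_le hκ (by positivity)).2 (by linarith)⟩
  refine ⟨C, hC0, fun F _ f hf g hg => ?_⟩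
  calc _ ≤ ENNReal.ofReal (F ^ 2) * (_ ^ β * κ ^ (1 - β)) :=
        lintegral_lintegral_comp_sub_div_rpow_le hβ0.le hβ1.le hf hg hexp
    _ ≤ ENNReal.ofReal (F ^ 2) * (_ ^ β * ENNReal.ofReal C) := by gcongr
    _ = _ := by rw [ENNReal.ofReal_mul hC0.le]; ring

/-- Slobodeckij-seminorm composition estimate (Proposition 2.1 (iii) of the paper):
for `α > 0`, `β ∈ (0,1)`, `ε > 0` there is `C > 0` such that for every `β`-Hölder `f`
with constant `F` and every measurable `g`,
`∬_{I×I} |f(g(x))−f(g(y))|²/|x−y|^{1+2α} ≤ C F² (∬_{I×I} |g(x)−g(y)|²/|x−y|^{1+2(α/β+ε)})^β`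
with `I = [0,2π]`. -/
theorem stmt19 (α β ε : ℝ) (hα : 0 < α) (hβ0 : 0 < β) (hβ1 : β < 1) (hε : 0 < ε) :
    ∃ C : ℝ, 0 < C ∧
      ∀ F : ℝ, 0 ≤ F → ∀ f : ℝ → ℝ,
        (∀ u v : ℝ, |f u - f v| ≤ F * |u - v| ^ β) →
        ∀ g : ℝ → ℝ, Measurable g →
          (∫⁻ x in Set.Icc (0 : ℝ) (2 * Real.pi), ∫⁻ y in Set.Icc (0 : ℝ) (2 * Real.pi),
              ENNReal.ofReal (|f (g x) - f (g y)| ^ 2)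
                / ENNReal.ofReal (|x - y| ^ (1 + 2 * α)))
            ≤ ENNReal.ofReal (C * F ^ 2) *
              (∫⁻ x in Set.Icc (0 : ℝ) (2 * Real.pi), ∫⁻ y in Set.Icc (0 : ℝ) (2 * Real.pi),
                  ENNReal.ofReal (|g x - g y| ^ 2)
                    / ENNReal.ofReal (|x - y| ^ (1 + 2 * (α / β + ε)))) ^ β :=
  stmt19_general α β ε hβ0 hβ1 hε
end
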